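/- arXiv:2602.05039 — 3 statements merged into one kernel-verified Lean document; each statement's English description precedes it below -/
import Mathlib

section
/- (Amitsur) Let U and V be vector spaces over a field K and let T_1, …, T_d : U → V be linear maps that are locally linearly dependent. Then there exist scalars α_1, …, α_d ∈ K, not all zero, such that the linear map S = α_1 T_1 + … + α_d T_d has rank at most C(d+1, 2) − 1 = d(d+1)/2 − 1. -/
open Filter

/-- The set of products of at most `r` elements of `S` (monomials of length `≤ r`). -/
def monomials {A : Type*} [Monoid A] (S : Set A) (r : ℕ) : Set A :=
  {a | ∃ l : List A, l.length ≤ r ∧ (∀ x ∈ l, x ∈ S) ∧ l.prod = a}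

/-- `A_{≤ r}`: the `K`-linear span of the monomials of length at most `r` in `S`. -/
def ballSpan (K : Type*) {A : Type*} [Field K] [Ring A] [Algebra K A]
    (S : Set A) (r : ℕ) : Submodule K A :=
  Submodule.span K (monomials S r)

/-- The normalized rank `rk(X) = rank(X)/n` of an `n × n` matrix. -/
noncomputable def nrk {K : Type*} [Field K] {n : ℕ} (X : Matrix (Fin n) (Fin n) K) : ℝ :=
  (X.rank : ℝ) / n

/-- `φ : A → M_n(K)` is a `d`-approximation of `(A, S)`. -/
def IsDApprox (K : Type*) {A : Type*} [Field K] [Ring A] [Algebra K A]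
    (S : Set A) (d n : ℕ) (φ : A →ₗ[K] Matrix (Fin n) (Fin n) K) : Prop :=
  (∃ U : Submodule K (Fin n → K),
    ((1 : ℝ) - 1 / d) * n ≤ Module.finrank K U ∧
    ∀ x ∈ ballSpan K S d, ∀ y ∈ ballSpan K S d, ∀ u ∈ U,
      (φ (x * y)).mulVec u = (φ x).mulVec ((φ y).mulVec u)) ∧
  (∀ a ∈ ballSpan K S d, a ≠ 0 → (1 : ℝ) - 1 / d ≤ nrk (φ a))

/-- A sequence of linear maps `φ_k : A → M_{n_k}(K)` is a linear sofic approximation if for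
every `d` it is eventually a `d`-approximation. -/
def IsLinearSoficApprox (K : Type*) {A : Type*} [Field K] [Ring A] [Algebra K A]
    (S : Set A) (n : ℕ → ℕ) (φ : ∀ k, A →ₗ[K] Matrix (Fin (n k)) (Fin (n k)) K) : Prop :=
  ∀ d : ℕ, ∀ᶠ k in atTop, IsDApprox K S d (n k) (φ k)

/-- `A` is an amenable `K`-algebra: there is an exhausting increasing sequence of
finite-dimensional subspaces which is a Følner sequence. -/
def IsAmenableAlgebra (K A : Type*) [Field K] [Ring A] [Algebra K A] : Prop :=
  ∃ W : ℕ → Submodule K A, Monotone W ∧ (∀ i, FiniteDimensional K (W i)) ∧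
    (⨆ i, W i) = ⊤ ∧
    ∀ V : Submodule K A, FiniteDimensional K V →
      Tendsto (fun i => (Module.finrank K ↥(V * W i) : ℝ) / Module.finrank K (W i))
        atTop (nhds 1)

/-- The linear map `a ↦ φ(a) v`. -/
def evalVec {K : Type*} [Field K] {A : Type*} [Ring A] [Algebra K A] {n : ℕ}
    (φ : A →ₗ[K] Matrix (Fin n) (Fin n) K) (v : Fin n → K) : A →ₗ[K] (Fin n → K) where
  toFun a := (φ a).mulVec v
  map_add' a b := by simp [Matrix.add_mulVec]
  map_smul' c a := by simp [Matrix.smul_mulVec]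

/-- `v` is a `W`-root vector for `φ`: `w ↦ φ(w) v` is injective on `W` and
`φ(xy)v = φ(x)(φ(y)v)` for all `x, y ∈ W`. -/
def IsRootVector {K : Type*} [Field K] {A : Type*} [Ring A] [Algebra K A] {n : ℕ}
    (φ : A →ₗ[K] Matrix (Fin n) (Fin n) K) (W : Submodule K A) (v : Fin n → K) : Prop :=
  Set.InjOn (fun a => (φ a).mulVec v) (W : Set A) ∧
  ∀ x ∈ W, ∀ y ∈ W, (φ (x * y)).mulVec v = (φ x).mulVec ((φ y).mulVec v)

/-- `A` is weakly stable (w.r.t. the generating set `S`). -/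
def WeaklyStable (K : Type*) {A : Type*} [Field K] [Ring A] [Algebra K A] (S : Set A) : Prop :=
  ∀ ε : ℝ, 0 < ε → ∃ d : ℕ, ∀ n : ℕ, ∀ φ : A →ₗ[K] Matrix (Fin n) (Fin n) K,
    IsDApprox K S d n φ →
      ∃ ψ : A →ₗ[K] Matrix (Fin n) (Fin n) K,
        (∀ a b : A, ψ (a * b) = ψ a * ψ b) ∧ ∀ s ∈ S, nrk (φ s - ψ s) < ε

/-!
Over an infinite field one shows by induction on `d` that some nontrivial combination has rank
at most `C(d, 2)`. Split the family as `T₀, T₁, …, T_{d-1}`. If the tail is not locally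
dependent, pick `u₀` where `Tᵢ u₀` (`i ≥ 1`) are independent, write `T₀ u₀ = ∑ cᵢ Tᵢ u₀`, and let
`W = span {Tᵢ u₀}`. If the tail stays locally dependent modulo `W`, induction in `V ⧸ W` costs
`dim W = d - 1` more. Otherwise, comparing the relations at `u` and `u + u₀` shows
`T₀ u = ∑ cᵢ Tᵢ u` whenever the `Tᵢ u` are independent modulo `W`; every line `b + t u₁` in
the direction of such a `u₁` meets this set (a determinant in `t` has finitely many roots), so
`T₀ = ∑ cᵢ Tᵢ`.

Over a finite field `𝔽_q` one counts instead: if every nontrivial combination had rank `≥ d`,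
some finite-dimensional `U' ≤ U` would be covered by `q^d - 1` kernels of codimension `≥ d`.
-/

open Module Submodule Set

section

variable {K U V : Type*} [Field K] [AddCommGroup U] [Module K U] [AddCommGroup V] [Module K V]

theorem LinearIndependent.exists_linearIndependent_add_smul [Infinite K] {ι : Type*} [Fintype ι]
    [DecidableEq ι] {y : ι → V} (hy : LinearIndependent K y) (x : ι → V) :
    ∃ t : K, LinearIndependent K (x + t • y) := by
  obtain ⟨g, hg⟩ := LinearMap.exists_extend (Basis.span hy).equivFun.toLinearMap
  have hgy (i : ι) : g (y i) = Pi.single i 1 := by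
    simpa [Basis.span_apply, Finsupp.single_eq_pi_single] using congr($hg (Basis.span hy i))
  -- `g` sends `y` to the standard basis, so `g ∘ (x + t • y)` is the column family of
  -- `A + t • 1`, which is invertible away from the finitely many eigenvalues of `-A`.
  obtain ⟨A, hA⟩ : ∃ A : Matrix ι ι K, ∀ i, A.col i = g (x i) :=
    ⟨.of fun k i => g (x i) k, fun _ => rfl⟩
  obtain ⟨t, ht⟩ := (Matrix.finite_spectrum (-A)).infinite_compl.nonempty
  refine ⟨t, LinearIndependent.of_comp g ?_⟩
  have hcol : g ∘ (x + t • y) = (A + t • 1).col := by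
    ext i k
    simp [← hA, hgy, Pi.single_apply, Matrix.one_apply, eq_comm]
  rw [hcol, Matrix.linearIndependent_cols_iff_isUnit]
  simpa [spectrum.mem_iff, Algebra.algebraMap_eq_smul_one, add_comm] using ht

theorem rank_range_le_rank_range_mkQ_comp_add (f : U →ₗ[K] V) (W : Submodule K V) :
    Module.rank K (LinearMap.range f) ≤
      Module.rank K (LinearMap.range (W.mkQ ∘ₗ f)) + Module.rank K W := by
  have key := LinearMap.rank_range_add_rank_ker (W.mkQ ∘ₗ (LinearMap.range f).subtype)
  rw [LinearMap.range_comp, Submodule.range_subtype, ← LinearMap.range_comp, LinearMap.ker_comp,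
    Submodule.ker_mkQ] at key
  rw [← key]
  gcongr
  rw [(Submodule.equivSubtypeMap _ _).rank_eq, Submodule.map_comap_subtype]
  exact Submodule.rank_mono inf_le_right

def LocallyLinearlyDependent {ι : Type*} (T : ι → U →ₗ[K] V) : Prop :=
  ∀ u, ¬ LinearIndependent K fun i => T i u

namespace LocallyLinearlyDependent

variable {n : ℕ} {T₀ : U →ₗ[K] V} {T : Fin n → U →ₗ[K] V}

theorem exists_apply_eq_sum_smul (hT : LocallyLinearlyDependent (Fin.cons T₀ T))
    {u : U} (hu : LinearIndependent K fun i => T i u) :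
    ∃ c : Fin n → K, T₀ u = ∑ i, c i • T i u := by
  by_contra! h
  refine hT u ?_
  rw [show (fun i => (Fin.cons T₀ T : Fin (n + 1) → U →ₗ[K] V) i u) =
      Fin.cons (T₀ u) fun i => T i u from Fin.comp_cons (fun S : U →ₗ[K] V => S u) _ _]
  exact linearIndependent_finCons.2 ⟨hu, fun hmem => by
    obtain ⟨c, hc⟩ := mem_span_range_iff_exists_fun K |>.1 hmem
    exact h c hc.symm⟩

theorem apply_eq_sum_smul_of_linearIndependent_mkQ
    (hT : LocallyLinearlyDependent (Fin.cons T₀ T))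
    {u₀ u : U} {c : Fin n → K} (hu₀ : LinearIndependent K fun i => T i u₀)
    (hc : T₀ u₀ = ∑ i, c i • T i u₀)
    (hu : LinearIndependent K fun i => (span K (range fun i => T i u₀)).mkQ (T i u)) :
    T₀ u = ∑ i, c i • T i u := by
  set W := span K (range fun i => T i u₀)
  have hW (i : Fin n) : T i u₀ ∈ W := subset_span ⟨i, rfl⟩
  have hW₀ : T₀ u₀ ∈ W := hc ▸ sum_mem fun i _ => smul_mem _ _ (hW i)
  have hshift (S : U →ₗ[K] V) (hS : S u₀ ∈ W) : W.mkQ (S (u + u₀)) = W.mkQ (S u) := by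
    simp [(Submodule.Quotient.mk_eq_zero W).2 hS]
  -- Modulo `W` the relations at `u` and at `u + u₀` coincide, so they have the same
  -- coefficients; their difference is then a relation at `u₀`, which forces those to be `c`.
  obtain ⟨ν, hν⟩ := hT.exists_apply_eq_sum_smul (hu.of_comp W.mkQ)
  obtain ⟨μ, hμ⟩ := hT.exists_apply_eq_sum_smul (u := u + u₀)
    (.of_comp W.mkQ (by simpa only [Function.comp_def, hshift _ (hW _)] using hu))
  have hμν : μ = ν := by
    refine funext <| Fintype.linearIndependent_iffₛ.1 hu μ ν ?_
    have := congr(W.mkQ $hμ)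
    simp only [map_sum, map_smul, hshift _ (hW _), hshift _ hW₀] at this
    rw [← this, hν]
    simp
  subst hμν
  have hμ₀ : T₀ u₀ = ∑ i, μ i • T i u₀ := by
    simpa [hν, smul_add, Finset.sum_add_distrib] using hμ
  have hμc : μ = c := funext <| Fintype.linearIndependent_iffₛ.1 hu₀ μ c (hμ₀.symm.trans hc)
  rw [hν, hμc]

theorem eq_sum_smul_of_linearIndependent_mkQ [Infinite K]
    (hT : LocallyLinearlyDependent (Fin.cons T₀ T))
    {u₀ u₁ : U} {c : Fin n → K} (hu₀ : LinearIndependent K fun i => T i u₀)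
    (hc : T₀ u₀ = ∑ i, c i • T i u₀)
    (hu₁ : LinearIndependent K fun i => (span K (range fun i => T i u₀)).mkQ (T i u₁)) :
    T₀ = ∑ i, c i • T i := by
  ext b
  obtain ⟨t, ht⟩ := hu₁.exists_linearIndependent_add_smul
    fun i => (span K (range fun i => T i u₀)).mkQ (T i b)
  have hb := hT.apply_eq_sum_smul_of_linearIndependent_mkQ (u := b + t • u₁) hu₀ hc
    (by simpa [Pi.add_def] using ht)
  have h₁ := hT.apply_eq_sum_smul_of_linearIndependent_mkQ hu₀ hc hu₁
  simp only [map_add, map_smul, smul_add, Finset.sum_add_distrib, h₁, Finset.smul_sum,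
    smul_comm t] at hb
  simpa using add_right_cancel hb

end LocallyLinearlyDependent

theorem LocallyLinearlyDependent.exists_rank_range_le_choose [Infinite K] {n : ℕ}
    {T : Fin n → U →ₗ[K] V} (hT : LocallyLinearlyDependent T) :
    ∃ α : Fin n → K, α ≠ 0 ∧ Module.rank K (LinearMap.range (∑ i, α i • T i)) ≤ n.choose 2 := by
  induction n generalizing V with
  | zero => exact (hT 0 linearIndependent_empty_type).elim
  | succ n ih =>
    obtain ⟨T₀, T, rfl⟩ : ∃ T₀ T', T = Fin.cons T₀ T' := ⟨_, _, (Fin.cons_self_tail T).symm⟩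
    have hsum (a : K) (β : Fin n → K) :
        ∑ i, (Fin.cons a β : Fin (n + 1) → K) i • (Fin.cons T₀ T : Fin (n + 1) → U →ₗ[K] V) i =
          a • T₀ + ∑ i, β i • T i := by
      simp [Fin.sum_univ_succ]
    by_cases htail : LocallyLinearlyDependent T
    · obtain ⟨β, hβ, hrank⟩ := ih htail
      refine ⟨Fin.cons 0 β, fun h => hβ (congr_arg Fin.tail h), ?_⟩
      rw [hsum, zero_smul, zero_add]
      exact hrank.trans (by exact_mod_cast Nat.choose_le_succ n 2)
    obtain ⟨u₀, hu₀⟩ : ∃ u₀, LinearIndependent K fun i => T i u₀ := by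
      simpa [LocallyLinearlyDependent] using htail
    obtain ⟨c, hc⟩ := hT.exists_apply_eq_sum_smul hu₀
    set W := span K (range fun i => T i u₀)
    by_cases hquot : LocallyLinearlyDependent fun i => W.mkQ ∘ₗ T i
    · obtain ⟨β, hβ, hrank⟩ := ih hquot
      refine ⟨Fin.cons 0 β, fun h => hβ (congr_arg Fin.tail h), ?_⟩
      rw [hsum, zero_smul, zero_add]
      calc Module.rank K (LinearMap.range (∑ i, β i • T i))
          ≤ Module.rank K (LinearMap.range (W.mkQ ∘ₗ ∑ i, β i • T i)) + Module.rank K W :=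
            rank_range_le_rank_range_mkQ_comp_add _ _
        _ ≤ n.choose 2 + n := by
            gcongr
            · rwa [show W.mkQ ∘ₗ ∑ i, β i • T i = ∑ i, β i • (W.mkQ ∘ₗ T i) by ext; simp]
            · exact (rank_span_le _).trans <| by
                simpa using Cardinal.mk_range_le_lift (f := fun i => T i u₀)
        _ = (n + 1).choose 2 := by
            norm_cast
            rw [Nat.choose_succ_succ', Nat.choose_one_right, add_comm]
    · obtain ⟨u₁, hu₁⟩ : ∃ u₁, LinearIndependent K fun i => W.mkQ (T i u₁) := by
        simpa [LocallyLinearlyDependent] using hquot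
      refine ⟨Fin.cons 1 fun i => -c i, fun h => one_ne_zero (congr_fun h 0), ?_⟩
      rw [hsum, one_smul, hT.eq_sum_smul_of_linearIndependent_mkQ hu₀ hc hu₁,
        ← Finset.sum_add_distrib, Finset.sum_eq_zero fun i _ => by rw [neg_smul, add_neg_cancel]]
      simp

theorem exists_finiteDimensional_le_finrank_map {J : Type*} [Finite J] (f : J → U →ₗ[K] V)
    {r : ℕ} (hr : ∀ j, (r : Cardinal) ≤ (f j).rank) :
    ∃ U' : Submodule K U, FiniteDimensional K U' ∧ ∀ j, r ≤ finrank K (U'.map (f j)) := by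
  choose s hs hli using fun j => LinearMap.le_rank_iff_exists_linearIndependent_finset.1 (hr j)
  have hU' : FiniteDimensional K (span K (⋃ j, (s j : Set U))) :=
    FiniteDimensional.span_of_finite K (finite_iUnion fun j => (s j).finite_toSet)
  refine ⟨_, hU', fun j => ?_⟩
  have hle : span K (range fun x : (s j : Set U) => f j x) ≤
      (span K (⋃ j, (s j : Set U))).map (f j) := span_le.2 <| by
      rintro _ ⟨x, rfl⟩
      exact mem_map_of_mem (subset_span (mem_iUnion_of_mem j x.2))
  calc r = finrank K (span K (range fun x : (s j : Set U) => f j x)) := by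
        rw [finrank_span_eq_card (hli j)]; simp [hs j]
    _ ≤ _ := Submodule.finrank_mono hle

theorem card_pow_le_card_of_forall_exists_apply_eq_zero [Finite K] {J : Type*} [Finite J]
    (f : J → U →ₗ[K] V) (U' : Submodule K U) [FiniteDimensional K U'] {r : ℕ}
    (hr : ∀ j, r ≤ finrank K (U'.map (f j))) (hcover : ∀ x ∈ U', ∃ j, f j x = 0) :
    Nat.card K ^ r ≤ Nat.card J := by
  have := Fintype.ofFinite J
  have := Module.finite_of_finite K (M := U')
  let g (j : J) : U' →ₗ[K] V := f j ∘ₗ U'.subtype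
  have hker (j : J) : Nat.card K ^ r * Nat.card (LinearMap.ker (g j)) ≤ Nat.card U' := by
    rw [Module.natCard_eq_pow_finrank (K := K) (V := LinearMap.ker (g j)),
      Module.natCard_eq_pow_finrank (K := K) (V := U'), ← pow_add,
      ← (g j).finrank_range_add_finrank_ker, LinearMap.range_comp, range_subtype]
    gcongr
    · exact Nat.card_pos
    · exact hr j
  have hsurj : Function.Surjective fun p : Σ j, LinearMap.ker (g j) => (p.2 : U') :=
    fun x => let ⟨j, hj⟩ := hcover x x.2; ⟨⟨j, x, hj⟩, rfl⟩
  have hcard : Nat.card K ^ r * Nat.card U' ≤ Nat.card J * Nat.card U' :=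
    calc Nat.card K ^ r * Nat.card U'
        ≤ Nat.card K ^ r * ∑ j, Nat.card (LinearMap.ker (g j)) := by
          gcongr
          rw [← Nat.card_sigma]
          exact Nat.card_le_card_of_surjective _ hsurj
      _ ≤ Nat.card J * Nat.card U' := by
          rw [Finset.mul_sum]
          exact (Finset.sum_le_card_nsmul _ _ _ fun j _ => hker j).trans_eq
            (by simp [Nat.card_eq_fintype_card])
  exact Nat.le_of_mul_le_mul_right hcard Nat.card_pos

theorem LocallyLinearlyDependent.exists_rank_range_lt [Finite K] {ι : Type*} [Fintype ι]
    {T : ι → U →ₗ[K] V} (hT : LocallyLinearlyDependent T) :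
    ∃ α : ι → K, α ≠ 0 ∧ Module.rank K (LinearMap.range (∑ i, α i • T i)) < Fintype.card ι := by
  by_contra! h
  obtain ⟨U', hU', hr⟩ := exists_finiteDimensional_le_finrank_map
    (fun α : {α : ι → K // α ≠ 0} => ∑ i, α.1 i • T i) fun α => h α.1 α.2
  have hcover (x : U) (_ : x ∈ U') :
      ∃ α : {α : ι → K // α ≠ 0}, (∑ i, α.1 i • T i) x = 0 := by
    obtain ⟨α, hα, i, hi⟩ := Fintype.not_linearIndependent_iff.1 (hT x)
    exact ⟨⟨α, fun h => hi (congr_fun h i)⟩, by simpa using hα⟩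
  have hle := card_pow_le_card_of_forall_exists_apply_eq_zero _ U' hr hcover
  have hlt : Nat.card {α : ι → K // α ≠ 0} < Nat.card K ^ Fintype.card ι := by
    simpa [Nat.card_fun] using
      Finite.card_subtype_lt (p := fun α : ι → K => α ≠ 0) (x := 0) (by simp)
  omega

end

/-- Theorem (Amitsur): if `T_1, …, T_d : U → V` are locally linearly dependent, then some
nontrivial linear combination has rank at most `C(d+1, 2) - 1`. -/
theorem amitsur_locally_linearly_dependent
    {K : Type*} [Field K] {U V : Type*} [AddCommGroup U] [Module K U]
    [AddCommGroup V] [Module K V] {d : ℕ} (T : Fin d → U →ₗ[K] V)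
    (hT : ∀ u : U, ¬ LinearIndependent K fun i => T i u) :
    ∃ α : Fin d → K, α ≠ 0 ∧
      Module.rank K (LinearMap.range (∑ i, α i • T i))
        ≤ (((d + 1).choose 2 - 1 : ℕ) : Cardinal) := by
  have hLLD : LocallyLinearlyDependent T := hT
  have hd : 0 < d := Nat.pos_of_ne_zero fun hd => by
    subst hd; exact hT 0 linearIndependent_empty_type
  have hchoose : (d + 1).choose 2 = d.choose 2 + d := by
    rw [Nat.choose_succ_succ', Nat.choose_one_right, add_comm]
  rcases finite_or_infinite K with hK | hK
  · obtain ⟨α, hα, hrank⟩ := hLLD.exists_rank_range_lt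
    obtain ⟨m, hm⟩ := Cardinal.lt_aleph0.1 (hrank.trans Cardinal.natCast_lt_aleph0)
    rw [hm, Fintype.card_fin, Nat.cast_lt] at hrank
    exact ⟨α, hα, hm ▸ Nat.cast_le.2 (by omega)⟩
  · obtain ⟨α, hα, hrank⟩ := hLLD.exists_rank_range_le_choose
    exact ⟨α, hα, hrank.trans (Nat.cast_le.2 (by omega))⟩
end

section
/- Let K be a field, A a finitely generated K-algebra with finite generating set S containing 1, d ∈ ℕ, and φ : A → M_n(K) a d-approximation of (A,S). Let W ≤ A_{≤d} be a nontrivial linear subspace. Then there exist W-root vectors v_1, …, v_ℓ ∈ K^n for φ such that the subspaces φ(W)v_1, …, φ(W)v_ℓ are linearly independent (their sum is direct) and dim(⊕_{i=1}^ℓ φ(W)v_i) ≥ (1 − 2/d)·n − dim W. -/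
open Filter

/-!
The tiles are chosen greedily: as long as the tiles `φ(W)v_i` chosen so far span a subspace `V`
with `dim V < (1 - 2/d)n - dim W`, there is one more root vector `v` with `φ(W)v ∩ V = 0`.
Taking `v` in the subspace `U` on which `φ` is multiplicative on `A_{≤d}`, only injectivity of
`w ↦ φ(w)v mod V` on `W` is at stake. For nonzero `w ∈ W` the map `u ↦ φ(w)u mod V` has rank at
least `dim U - n/d - dim V > dim W` on `U`, since `φ(w)` has corank at most `n/d`. Finally, a
bilinear map `B : U × W → Q` such that every `B(·, w)`, `w ≠ 0`, has rank `> dim W` has an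
injective `B(v, ·)`: over a finite field by counting the `v` that kill some `w`, over an infinite
field by taking `B(v, ·)` of maximal rank.
-/

open Module

theorem Set.Finite.monomials {A : Type*} [Monoid A] {S : Set A} (hS : S.Finite) (r : ℕ) :
    (monomials S r).Finite := by
  have := hS.to_subtype
  refine ((List.finite_length_le (α := S) r).image fun l => (l.map Subtype.val).prod).subset ?_
  rintro _ ⟨l, hl, hlS, rfl⟩
  exact ⟨l.pmap Subtype.mk hlS, by simpa using hl, by simp [List.map_pmap]⟩

theorem Submodule.finrank_le_finrank_map_add_finrank_ker {K E F : Type*} [Field K]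
    [AddCommGroup E] [Module K E] [FiniteDimensional K E] [AddCommGroup F] [Module K F]
    (f : E →ₗ[K] F) (X : Submodule K E) :
    finrank K X ≤ finrank K (X.map f) + finrank K (LinearMap.ker f) := by
  have hnullity := (f.domRestrict X).finrank_range_add_finrank_ker
  rw [LinearMap.range_domRestrict, LinearMap.ker_domRestrict] at hnullity
  have hker : finrank K ((LinearMap.ker f).comap X.subtype) ≤ finrank K (LinearMap.ker f) := by
    rw [← Submodule.finrank_map_subtype_eq]
    exact Submodule.finrank_mono (Submodule.map_comap_le _ _)
  omega

theorem Submodule.exists_iSupIndep_le_finrank_iSup {K M ι : Type*} [Field K] [AddCommGroup M]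
    [Module K M] [FiniteDimensional K M] (P : ι → Prop) (N : ι → Submodule K M) (c : ℝ)
    (hext : ∀ V : Submodule K M, (finrank K V : ℝ) < c → ∃ i, P i ∧ N i ≠ ⊥ ∧ Disjoint (N i) V) :
    ∃ (ℓ : ℕ) (v : Fin ℓ → ι), (∀ j, P (v j)) ∧ iSupIndep (fun j => N (v j)) ∧
      c ≤ finrank K ↥(⨆ j, N (v j)) := by
  classical
  have hgrow : ∀ k : ℕ, ∃ s : Finset ι, (∀ i ∈ s, P i) ∧ s.SupIndep N ∧
      (c ≤ finrank K ↥(s.sup N) ∨ k ≤ finrank K ↥(s.sup N)) := by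
    intro k
    induction k with
    | zero => exact ⟨∅, by simp, Finset.supIndep_empty _, Or.inr (Nat.zero_le _)⟩
    | succ k ih =>
      obtain ⟨s, hsP, hsN, hs⟩ := ih
      by_cases hc : c ≤ finrank K ↥(s.sup N)
      · exact ⟨s, hsP, hsN, Or.inl hc⟩
      obtain ⟨i, hiP, hi, hdisj⟩ := hext _ (not_le.mp hc)
      have hlt : s.sup N < (insert i s).sup N := by
        rw [Finset.sup_insert, sup_comm]
        exact left_lt_sup.mpr fun hle => hi (hdisj.eq_bot_of_le hle)
      refine ⟨insert i s, (Finset.forall_mem_insert _ _ _).mpr ⟨hiP, hsP⟩, hsN.insert hdisj,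
        Or.inr ?_⟩
      have := Submodule.finrank_lt_finrank_of_lt hlt
      have := hs.resolve_left hc
      omega
  obtain ⟨s, hsP, hsN, hs⟩ := hgrow (finrank K M + 1)
  have hc : c ≤ finrank K ↥(s.sup N) :=
    hs.resolve_right fun h => by have := Submodule.finrank_le (s.sup N); omega
  refine ⟨s.card, fun j => s.equivFin.symm j, fun j => hsP _ (s.equivFin.symm j).2, ?_, ?_⟩
  · exact (iSupIndep_comp_coe_iff_supIndep.mpr hsN).comp s.equivFin.symm.injective
  · have hsup : ⨆ i : s, N i = s.sup N := by rw [Finset.sup_eq_iSup, iSup_subtype']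
    rwa [s.equivFin.symm.iSup_comp (g := fun i : s => N i), hsup]

namespace LinearMap

variable {K : Type*} [Field K]

/-- With `π ∘ L = id` and `T = π ∘ M`, injectivity of `L + t • M` follows from that of
`1 + t • T`, which fails only when `-t⁻¹` is an eigenvalue of `T`. -/
theorem exists_ne_zero_injective_add_smul [Infinite K] {E F : Type*}
    [AddCommGroup E] [Module K E] [FiniteDimensional K E] [AddCommGroup F] [Module K F]
    {L : E →ₗ[K] F} (hL : Function.Injective L) (M : E →ₗ[K] F) :
    ∃ t : K, t ≠ 0 ∧ Function.Injective (L + t • M) := by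
  obtain ⟨π, hπ⟩ := L.exists_leftInverse_of_injective (ker_eq_bot.mpr hL)
  obtain ⟨μ, hμ⟩ :=
    ((Module.End.finite_hasEigenvalue (π ∘ₗ M)).union (Set.finite_singleton 0)).exists_notMem
  simp only [Set.mem_union, Set.mem_ofPred_eq, Set.mem_singleton_iff, not_or] at hμ
  refine ⟨-μ⁻¹, by simpa using hμ.2, (injective_iff_map_eq_zero _).mpr fun x hx => ?_⟩
  by_contra hx0
  refine hμ.1 (Module.End.hasEigenvalue_of_hasEigenvector ⟨?_, hx0⟩)
  have hπx := congrArg (fun y => μ • π y) hx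
  simp only [add_apply, smul_apply, map_add, map_smul, map_zero, smul_zero, smul_add,
    smul_smul, mul_neg, mul_inv_cancel₀ hμ.2] at hπx
  rw [← comp_apply π L, hπ, id_apply] at hπx
  rw [Module.End.mem_genEigenspace_one, comp_apply]
  linear_combination (norm := module) -hπx

/-- If `F x = 0` but `G x ∉ range F`, then `G x` together with the image of a complement `C` of
`ker F` stays independent in `range (F + t • G)` for some `t`. -/
theorem exists_finrank_range_lt_finrank_range_add_smul [Infinite K] {W Q : Type*}
    [AddCommGroup W] [Module K W] [FiniteDimensional K W] [AddCommGroup Q] [Module K Q]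
    {F : W →ₗ[K] Q} (G : W →ₗ[K] Q) {x : W} (hx : F x = 0) (hGx : G x ∉ range F) :
    ∃ t : K, finrank K (range F) < finrank K (range (F + t • G)) := by
  obtain ⟨C, hC⟩ := (ker F).exists_isCompl
  let L : K × C →ₗ[K] Q := (toSpanSingleton K Q (G x)).coprod (F ∘ₗ C.subtype)
  let M : K × C →ₗ[K] Q := coprod 0 (G ∘ₗ C.subtype)
  have hL : Function.Injective L := by
    refine (injective_iff_map_eq_zero _).mpr fun ⟨a, c⟩ h => ?_
    simp only [L, coprod_apply, toSpanSingleton_apply, comp_apply, Submodule.subtype_apply] at h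
    have ha : a = 0 := by
      by_contra ha
      refine hGx ⟨-a⁻¹ • (c : W), ?_⟩
      rw [map_smul, neg_smul, ← smul_neg, ← eq_neg_of_add_eq_zero_left h, smul_smul,
        inv_mul_cancel₀ ha, one_smul]
    subst ha
    have hc : (c : W) ∈ ker F := by simpa using h
    have hc0 : (c : W) = 0 := Submodule.disjoint_def.mp hC.disjoint c hc c.2
    exact Prod.ext rfl (Subtype.ext hc0)
  obtain ⟨t, ht0, ht⟩ := exists_ne_zero_injective_add_smul hL M
  refine ⟨t, ?_⟩
  have hrange : range (L + t • M) ≤ range (F + t • G) := by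
    rintro _ ⟨⟨a, c⟩, rfl⟩
    refine ⟨t⁻¹ • a • x + c, ?_⟩
    simp [L, M, hx, smul_smul, ht0, add_left_comm, add_comm]
  have hC' : finrank K C = finrank K (range F) := by
    have := Submodule.finrank_add_eq_of_isCompl hC
    have := F.finrank_range_add_finrank_ker
    omega
  have := finrank_range_of_inj ht
  have := Submodule.finrank_mono hrange
  simp only [Module.finrank_prod, Module.finrank_self] at *
  omega

variable {U W Q : Type*} [AddCommGroup U] [Module K U] [AddCommGroup W] [Module K W]
  [FiniteDimensional K W] [AddCommGroup Q] [Module K Q]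

/-- If `B v₀` has maximal rank and `x ≠ 0` is in its kernel, the previous lemma forces
`B v x ∈ range (B v₀)` for every `v`, so `range (B.flip x)` is too small. -/
theorem exists_injective_apply_of_infinite [Infinite K] (B : U →ₗ[K] W →ₗ[K] Q)
    (h : ∀ w ≠ 0, finrank K W < finrank K (range (B.flip w))) :
    ∃ v, Function.Injective (B v) := by
  obtain ⟨_, ⟨v₀, rfl⟩, hv₀⟩ := Set.exists_max_image
    (Set.range fun v : U => finrank K (range (B v))) (fun k => k)
    ((Set.finite_Iic (finrank K W)).subset
      (Set.range_subset_iff.mpr fun v => finrank_range_le (B v)))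
    (Set.range_nonempty _)
  refine ⟨v₀, (injective_iff_map_eq_zero _).mpr fun x hx => ?_⟩
  by_contra hx0
  have hsub : range (B.flip x) ≤ range (B v₀) := by
    rintro _ ⟨v, rfl⟩
    by_contra hv
    obtain ⟨t, ht⟩ := exists_finrank_range_lt_finrank_range_add_smul (B v) hx hv
    rw [← map_smul, ← map_add] at ht
    exact (hv₀ _ ⟨_, rfl⟩).not_gt ht
  have := Submodule.finrank_mono hsub
  have := finrank_range_le (B v₀)
  have := h x hx0
  omega

/-- Each nonzero `w` is killed by at most `q ^ (dim U - dim W - 1)` vectors `v`, and there are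
fewer than `q ^ dim W` such `w`. -/
theorem exists_injective_apply_of_finite [Finite K] [FiniteDimensional K U]
    (B : U →ₗ[K] W →ₗ[K] Q) (h : ∀ w ≠ 0, finrank K W < finrank K (range (B.flip w))) :
    ∃ v, Function.Injective (B v) := by
  classical
  have := Module.finite_of_finite K (M := U)
  have := Module.finite_of_finite K (M := W)
  have := Fintype.ofFinite U
  have := Fintype.ofFinite W
  set q := Nat.card K
  set m := finrank K W
  set u := finrank K U
  have hq : 0 < q := Nat.card_pos
  have hU : (Finset.univ : Finset U).card = q ^ u := by
    rw [Finset.card_univ, ← Nat.card_eq_fintype_card, Module.natCard_eq_pow_finrank (K := K)]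
  have hW : (Finset.univ : Finset W).card = q ^ m := by
    rw [Finset.card_univ, ← Nat.card_eq_fintype_card, Module.natCard_eq_pow_finrank (K := K)]
  let zeroes (w : W) : Finset U := Finset.univ.filter fun v => B v w = 0
  have hzeroes : ∀ w ≠ 0, (zeroes w).card * q ^ (m + 1) ≤ q ^ u := by
    intro w hw
    have hcard : (zeroes w).card = Nat.card (ker (B.flip w)) := by
      rw [← Fintype.card_subtype, ← Nat.card_eq_fintype_card]; rfl
    rw [hcard, Module.natCard_eq_pow_finrank (K := K), ← pow_add]
    have := h w hw
    have := (B.flip w).finrank_range_add_finrank_ker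
    exact Nat.pow_le_pow_right hq (by omega)
  let bad : Finset U := (Finset.univ.erase 0).biUnion zeroes
  have hbad : bad.card * q ^ (m + 1) < Finset.univ.card * q ^ (m + 1) :=
    calc bad.card * q ^ (m + 1)
        ≤ ∑ w ∈ Finset.univ.erase 0, (zeroes w).card * q ^ (m + 1) := by
          rw [← Finset.sum_mul]; gcongr; exact Finset.card_biUnion_le
      _ ≤ ∑ w ∈ Finset.univ.erase (0 : W), q ^ u :=
          Finset.sum_le_sum fun w hw => hzeroes w (Finset.ne_of_mem_erase hw)
      _ = (q ^ m - 1) * q ^ u := by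
          rw [Finset.sum_const, Finset.card_erase_of_mem (Finset.mem_univ _), hW, smul_eq_mul]
      _ < q ^ (m + 1) * q ^ u := by
          refine mul_lt_mul_of_pos_right ?_ (pow_pos hq u)
          have := Nat.pow_le_pow_right hq (Nat.le_add_right m 1)
          have := pow_pos hq m
          omega
      _ = Finset.univ.card * q ^ (m + 1) := by rw [hU, mul_comm]
  obtain ⟨v, -, hv⟩ :=
    Finset.exists_mem_notMem_of_card_lt_card (lt_of_mul_lt_mul_right hbad (Nat.zero_le _))
  refine ⟨v, (injective_iff_map_eq_zero _).mpr fun w hw => ?_⟩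
  by_contra hw0
  exact hv (Finset.mem_biUnion.mpr ⟨w, Finset.mem_erase.mpr ⟨hw0, Finset.mem_univ _⟩,
    Finset.mem_filter.mpr ⟨Finset.mem_univ _, hw⟩⟩)

theorem exists_injective_apply_of_finrank_lt_finrank_range_flip [FiniteDimensional K U]
    (B : U →ₗ[K] W →ₗ[K] Q) (h : ∀ w ≠ 0, finrank K W < finrank K (range (B.flip w))) :
    ∃ v, Function.Injective (B v) := by
  cases finite_or_infinite K with
  | inl _ => exact exists_injective_apply_of_finite B h
  | inr _ => exact exists_injective_apply_of_infinite B h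

end LinearMap

theorem Matrix.mul_le_rank_of_le_nrk {K : Type*} [Field K] {n : ℕ} {X : Matrix (Fin n) (Fin n) K}
    {c : ℝ} (h : c ≤ nrk X) : c * n ≤ X.rank := by
  rcases n.eq_zero_or_pos with rfl | hn
  · simp
  · rwa [nrk, le_div_iff₀ (by exact_mod_cast hn)] at h

section RootVectors

variable {K A : Type*} [Field K] [Ring A] [Algebra K A] {n : ℕ}
  {φ : A →ₗ[K] Matrix (Fin n) (Fin n) K} {W : Submodule K A}

theorem IsRootVector.map_evalVec_ne_bot {v : Fin n → K} (hv : IsRootVector φ W v)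
    (hW : W ≠ ⊥) :
    W.map (evalVec φ v) ≠ ⊥ := by
  obtain ⟨w, hw, hw0⟩ := W.ne_bot_iff.mp hW
  intro hbot
  have hwv : evalVec φ v w ∈ W.map (evalVec φ v) := Submodule.mem_map_of_mem hw
  rw [hbot, Submodule.mem_bot] at hwv
  exact hw0 (hv.1 hw W.zero_mem (by simpa [evalVec] using hwv))

theorem IsDApprox.exists_isRootVector_disjoint {S : Set A} {d : ℕ} (hφ : IsDApprox K S d n φ)
    [FiniteDimensional K W] (hW : W ≤ ballSpan K S d) {V : Submodule K (Fin n → K)}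
    (hV : (finrank K V : ℝ) < (1 - 2 / d) * n - finrank K W) :
    ∃ v, IsRootVector φ W v ∧ Disjoint (W.map (evalVec φ v)) V := by
  obtain ⟨⟨U, hU, hmul⟩, hrank⟩ := hφ
  let B : U →ₗ[K] W →ₗ[K] (Fin n → K) ⧸ V :=
    LinearMap.mk₂ K (fun u w => V.mkQ (evalVec φ u w))
      (by simp [evalVec, Matrix.mulVec_add]) (by simp [evalVec, Matrix.mulVec_smul])
      (by simp [evalVec, Matrix.add_mulVec]) (by simp [evalVec])
  have hB : ∀ w ≠ 0, finrank K W < finrank K (LinearMap.range (B.flip w)) := by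
    intro w hw
    have hrange : LinearMap.range (B.flip w) = (U.map (φ w).mulVecLin).map V.mkQ := by
      ext; simp [B, evalVec]
    have hmap := Nat.cast_le (α := ℝ) |>.mpr <|
      Submodule.finrank_le_finrank_map_add_finrank_ker (φ w).mulVecLin U
    have hmkQ := Nat.cast_le (α := ℝ) |>.mpr <|
      Submodule.finrank_le_finrank_map_add_finrank_ker V.mkQ (U.map (φ w).mulVecLin)
    have hnullity := congrArg (Nat.cast (R := ℝ)) (φ w).mulVecLin.finrank_range_add_finrank_ker
    have hrk : (1 - 1 / d) * n ≤ ((φ w).rank : ℝ) :=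
      Matrix.mul_le_rank_of_le_nrk (hrank w (hW w.2) (by simpa using hw))
    rw [Submodule.ker_mkQ] at hmkQ
    rw [Module.finrank_fin_fun] at hnullity
    rw [Matrix.rank] at hrk
    rw [hrange, ← Nat.cast_lt (α := ℝ)]
    push_cast at hmap hmkQ hnullity
    have : (1 - 2 / (d : ℝ)) * n = 2 * ((1 - 1 / d) * n) - n := by ring
    linarith
  obtain ⟨⟨v, hvU⟩, hv⟩ :=
    LinearMap.exists_injective_apply_of_finrank_lt_finrank_range_flip B hB
  have hvV : ∀ w ∈ W, evalVec φ v w ∈ V → w = 0 := by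
    intro w hw hwV
    have : B ⟨v, hvU⟩ ⟨w, hw⟩ = B ⟨v, hvU⟩ 0 := by
      simpa [B, Submodule.Quotient.mk_eq_zero] using hwV
    simpa using hv this
  refine ⟨v, ⟨fun a ha b hb hab => ?_, fun x hx y hy => hmul x (hW hx) y (hW hy) v hvU⟩, ?_⟩
  · refine sub_eq_zero.mp (hvV (a - b) (W.sub_mem ha hb) ?_)
    simp only at hab
    simp [evalVec, Matrix.sub_mulVec, hab]
  · rw [Submodule.disjoint_def]
    rintro _ ⟨w, hw, rfl⟩ hwV
    simp [hvV w hw hwV]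

end RootVectors

theorem linear_monotiling_general
    {K : Type*} [Field K] {A : Type*} [Ring A] [Algebra K A]
    (S : Finset A)
    (d n : ℕ) (φ : A →ₗ[K] Matrix (Fin n) (Fin n) K)
    (hφ : IsDApprox K (S : Set A) d n φ)
    (W : Submodule K A) (hW : W ≤ ballSpan K (S : Set A) d) (hWne : W ≠ ⊥) :
    ∃ (ℓ : ℕ) (v : Fin ℓ → (Fin n → K)),
      (∀ i, IsRootVector φ W (v i)) ∧
      iSupIndep (fun i : Fin ℓ => W.map (evalVec φ (v i))) ∧
      (1 - 2 / d) * n - Module.finrank K W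
        ≤ (Module.finrank K ↥(⨆ i : Fin ℓ, W.map (evalVec φ (v i))) : ℝ) := by
  have : FiniteDimensional K (ballSpan K (S : Set A) d) :=
    FiniteDimensional.span_of_finite K (S.finite_toSet.monomials d)
  have : FiniteDimensional K W := Submodule.finiteDimensional_of_le hW
  refine Submodule.exists_iSupIndep_le_finrank_iSup (IsRootVector φ W)
    (fun v => W.map (evalVec φ v)) _ fun V hV => ?_
  obtain ⟨v, hv, hdisj⟩ := hφ.exists_isRootVector_disjoint hW hV
  exact ⟨v, hv, hv.map_evalVec_ne_bot hWne, hdisj⟩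

/-- Lemma (linear monotiling): a `d`-approximation admits `W`-root vectors `v_1, …, v_ℓ` such
that the subspaces `φ(W)v_i` are independent and their direct sum has dimension at least
`(1 - 2/d)·n - dim W`. -/
theorem linear_monotiling
    {K : Type*} [Field K] {A : Type*} [Ring A] [Algebra K A]
    (S : Finset A) (h1 : (1 : A) ∈ S)
    (hgen : Algebra.adjoin K (S : Set A) = ⊤)
    (d n : ℕ) (φ : A →ₗ[K] Matrix (Fin n) (Fin n) K)
    (hφ : IsDApprox K (S : Set A) d n φ)
    (W : Submodule K A) (hW : W ≤ ballSpan K (S : Set A) d) (hWne : W ≠ ⊥) :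
    ∃ (ℓ : ℕ) (v : Fin ℓ → (Fin n → K)),
      (∀ i, IsRootVector φ W (v i)) ∧
      iSupIndep (fun i : Fin ℓ => W.map (evalVec φ (v i))) ∧
      (1 - 2 / d) * n - Module.finrank K W
        ≤ (Module.finrank K ↥(⨆ i : Fin ℓ, W.map (evalVec φ (v i))) : ℝ) :=
  linear_monotiling_general S d n φ hφ W hW hWne
end

section
/- Let K be a field and A a finite-dimensional K-algebra with no zero divisors, with finite generating set S containing 1. Let n, d ∈ ℕ with d > n and d ≥ dim_K A. If φ, ψ : A → M_n(K) are both d-approximations of (A,S), then φ and ψ are genuine algebra representations and are truly conjugate: there exists M ∈ GL_n(K) with M φ(a) M^{-1} = ψ(a) for every a ∈ A. -/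
open Filter

/-!
Because `d > n`, the subspace `U` in the definition of a `d`-approximation and the rank of every
`φ a` with `a ≠ 0` are forced to be full, and because `d ≥ dim_K A` the span `A_{≤d}` is all of
`A`; so `φ` and `ψ` are unital algebra homomorphisms. A finite-dimensional domain is a division
algebra `D`, and `K^n` with either action is a `D`-vector space of `D`-dimension `n / dim_K D`;
a `D`-linear isomorphism between the two is the conjugating matrix.
-/

section BallSpan

open Pointwise

variable {K : Type*} [Field K] {A : Type*} [Ring A] [Algebra K A] {S : Set A}

lemma monomials_mono {r t : ℕ} (h : r ≤ t) : monomials S r ⊆ monomials S t := by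
  rintro a ⟨l, hl, hS, rfl⟩
  exact ⟨l, hl.trans h, hS, rfl⟩

lemma one_mem_monomials (r : ℕ) : (1 : A) ∈ monomials S r :=
  ⟨[], by simp, by simp, by simp⟩

lemma mem_monomials_one {s : A} (hs : s ∈ S) : s ∈ monomials S 1 :=
  ⟨[s], by simp, by simpa using hs, by simp⟩

lemma monomials_mul_subset (r t : ℕ) : monomials S r * monomials S t ⊆ monomials S (r + t) := by
  rintro _ ⟨a, ⟨l, hl, hlS, rfl⟩, b, ⟨m, hm, hmS, rfl⟩, rfl⟩
  refine ⟨l ++ m, by simpa using Nat.add_le_add hl hm, fun x hx => ?_, by simp⟩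
  rcases List.mem_append.1 hx with hx | hx
  exacts [hlS x hx, hmS x hx]

lemma ballSpan_mono : Monotone (ballSpan K S) :=
  fun _ _ h => Submodule.span_mono (monomials_mono h)

lemma ballSpan_mul_le (r t : ℕ) : ballSpan K S r * ballSpan K S t ≤ ballSpan K S (r + t) := by
  rw [ballSpan, ballSpan, Submodule.span_mul_span]
  exact Submodule.span_mono (monomials_mul_subset r t)

/-- `A_{≤r} = A_{≤r+1}` makes `A_{≤r}` stable under left multiplication by `S`, hence by all of
`A`; it then contains `a * 1` for every `a`. -/
lemma ballSpan_eq_top_of_succ_eq (hgen : Algebra.adjoin K S = ⊤) {r : ℕ}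
    (h : ballSpan K S (r + 1) = ballSpan K S r) : ballSpan K S r = ⊤ := by
  have hS : ∀ s ∈ S, ∀ y ∈ ballSpan K S r, s * y ∈ ballSpan K S r := fun s hs y hy => by
    rw [← h, add_comm]
    exact ballSpan_mul_le 1 r
      (Submodule.mul_mem_mul (Submodule.subset_span (mem_monomials_one hs)) hy)
  have hstable : ∀ x ∈ Algebra.adjoin K S, ∀ y ∈ ballSpan K S r, x * y ∈ ballSpan K S r := by
    intro x hx
    induction hx using Algebra.adjoin_induction with
    | mem s hs => exact hS s hs
    | algebraMap c => exact fun y hy => (Algebra.smul_def c y) ▸ Submodule.smul_mem _ c hy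
    | add x y _ _ hx hy => exact fun z hz => (add_mul x y z).symm ▸ add_mem (hx z hz) (hy z hz)
    | mul x y _ _ hx hy => exact fun z hz => (mul_assoc x y z).symm ▸ hx _ (hy z hz)
  refine Submodule.eq_top_iff'.2 fun a => ?_
  simpa using hstable a (hgen ▸ Algebra.mem_top) 1 (Submodule.subset_span (one_mem_monomials r))

lemma le_finrank_ballSpan [FiniteDimensional K A] (hgen : Algebra.adjoin K S = ⊤) :
    ∀ r : ℕ, ballSpan K S r ≠ ⊤ → r ≤ Module.finrank K (ballSpan K S r)
  | 0, _ => Nat.zero_le _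
  | r + 1, hr1 => by
    have hr : ballSpan K S r ≠ ⊤ := ne_top_of_le_ne_top hr1 (ballSpan_mono r.le_succ)
    have hlt : ballSpan K S r < ballSpan K S (r + 1) :=
      lt_of_le_of_ne (ballSpan_mono r.le_succ) fun h => hr (ballSpan_eq_top_of_succ_eq hgen h.symm)
    exact (le_finrank_ballSpan hgen r hr).trans_lt (Submodule.finrank_lt_finrank_of_lt hlt)

lemma ballSpan_eq_top_of_finrank_le [FiniteDimensional K A] (hgen : Algebra.adjoin K S = ⊤)
    {d : ℕ} (hd : Module.finrank K A ≤ d) : ballSpan K S d = ⊤ := by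
  by_contra h
  have := le_finrank_ballSpan hgen d h
  have := Submodule.finrank_lt h
  omega

end BallSpan

lemma eq_of_one_sub_inv_mul_le {k n d : ℕ} (hk : k ≤ n) (hnd : n < d)
    (h : (1 - 1 / (d : ℝ)) * n ≤ k) : k = n := by
  have hd : (0 : ℝ) < d := by exact_mod_cast (Nat.zero_le n).trans_lt hnd
  have hnd' : (n : ℝ) / d < 1 := (div_lt_one hd).2 (by exact_mod_cast hnd)
  have hexpand : (1 - 1 / (d : ℝ)) * n = n - n / d := by ring
  by_contra hne
  have : (k : ℝ) + 1 ≤ n := by exact_mod_cast Nat.lt_of_le_of_ne hk hne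
  linarith

lemma Matrix.isUnit_of_rank_eq {K ι : Type*} [Field K] [Fintype ι] [DecidableEq ι]
    {X : Matrix ι ι K} (h : X.rank = Fintype.card ι) : IsUnit X := by
  refine Matrix.mulVec_surjective_iff_isUnit.1 fun v => ?_
  have : LinearMap.range X.mulVecLin = ⊤ :=
    Submodule.eq_top_of_finrank_eq (by rw [← Matrix.rank, h, Module.finrank_fintype_fun_eq_card])
  exact LinearMap.range_eq_top.1 this v

namespace IsDApprox

variable {K : Type*} [Field K] {A : Type*} [Ring A] [Algebra K A] {S : Set A} {d n : ℕ}
  {φ : A →ₗ[K] Matrix (Fin n) (Fin n) K}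

lemma map_mul (hφ : IsDApprox K S d n φ) (hnd : n < d) (hS : ballSpan K S d = ⊤) (a b : A) :
    φ (a * b) = φ a * φ b := by
  obtain ⟨⟨U, hU, hmul⟩, -⟩ := hφ
  have hUn : Module.finrank K U = n :=
    eq_of_one_sub_inv_mul_le ((Submodule.finrank_le U).trans_eq (Module.finrank_fin_fun K)) hnd hU
  have hUtop : U = ⊤ := Submodule.eq_top_of_finrank_eq (by rw [hUn, Module.finrank_fin_fun])
  refine Matrix.ext_iff_mulVec.2 fun v => ?_
  rw [hmul a (hS ▸ trivial) b (hS ▸ trivial) v (hUtop ▸ trivial), Matrix.mulVec_mulVec]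

lemma isUnit (hφ : IsDApprox K S d n φ) (hnd : n < d) (hS : ballSpan K S d = ⊤) {a : A}
    (ha : a ≠ 0) : IsUnit (φ a) := by
  have hrk : (1 - 1 / (d : ℝ)) * n ≤ (φ a).rank := by
    rcases n.eq_zero_or_pos with rfl | hn
    · simp
    · exact (le_div_iff₀ (by exact_mod_cast hn)).1 (hφ.2 a (hS ▸ trivial) ha)
  refine Matrix.isUnit_of_rank_eq ?_
  rw [Fintype.card_fin]
  exact eq_of_one_sub_inv_mul_le
    ((Matrix.rank_le_card_width _).trans_eq (Fintype.card_fin n)) hnd hrk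

lemma map_one [Nontrivial A] (hφ : IsDApprox K S d n φ) (hnd : n < d) (hS : ballSpan K S d = ⊤) :
    φ 1 = 1 :=
  (IsIdempotentElem.iff_eq_one_of_isUnit (hφ.isUnit hnd hS one_ne_zero)).1 <| by
    rw [IsIdempotentElem, ← hφ.map_mul hnd hS, mul_one]

def toAlgHom [Nontrivial A] (hφ : IsDApprox K S d n φ) (hnd : n < d) (hS : ballSpan K S d = ⊤) :
    A →ₐ[K] Matrix (Fin n) (Fin n) K :=
  AlgHom.ofLinearMap φ (hφ.map_one hnd hS) (hφ.map_mul hnd hS)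

end IsDApprox

open Matrix

/-- `ι → K` viewed as an `A`-module through `ρ`. -/
def RepSpace {K A ι : Type*} [CommSemiring K] [Semiring A] [Algebra K A] [Fintype ι]
    [DecidableEq ι] (_ρ : A →ₐ[K] Matrix ι ι K) : Type _ :=
  ι → K

namespace RepSpace

variable {K A ι : Type*} [Field K] [Ring A] [Algebra K A] [Fintype ι] [DecidableEq ι]
  (ρ : A →ₐ[K] Matrix ι ι K)

instance : AddCommGroup (RepSpace ρ) := inferInstanceAs (AddCommGroup (ι → K))

instance : Module K (RepSpace ρ) := inferInstanceAs (Module K (ι → K))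

instance : Module.Finite K (RepSpace ρ) := inferInstanceAs (Module.Finite K (ι → K))

instance : Module A (RepSpace ρ) :=
  Module.compHom (ι → K) (Matrix.toLinAlgEquiv'.toRingHom.comp ρ.toRingHom)

lemma smul_def (a : A) (v : RepSpace ρ) : a • v = (ρ a : Matrix ι ι K) *ᵥ (v : ι → K) := rfl

instance : IsScalarTower K A (RepSpace ρ) :=
  ⟨fun c a v => by simp only [smul_def, map_smul]; exact Matrix.smul_mulVec c (ρ a) v⟩

end RepSpace

theorem AlgHom.exists_units_conj_of_divisionRing {K D ι : Type*} [Field K] [DivisionRing D]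
    [Algebra K D] [FiniteDimensional K D] [Fintype ι] [DecidableEq ι]
    (ρ σ : D →ₐ[K] Matrix ι ι K) :
    ∃ M : (Matrix ι ι K)ˣ,
      ∀ a : D, (M : Matrix ι ι K) * ρ a * ((M⁻¹ : (Matrix ι ι K)ˣ) : Matrix ι ι K) = σ a := by
  have : Module.Finite D (RepSpace ρ) := Module.Finite.of_restrictScalars_finite K D _
  have : Module.Finite D (RepSpace σ) := Module.Finite.of_restrictScalars_finite K D _
  have hfinrank : Module.finrank D (RepSpace ρ) = Module.finrank D (RepSpace σ) := by
    refine Nat.eq_of_mul_eq_mul_left (Module.finrank_pos (R := K) (M := D)) ?_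
    rw [Module.finrank_mul_finrank, Module.finrank_mul_finrank]
    rfl
  obtain ⟨e⟩ := FiniteDimensional.nonempty_linearEquiv_of_finrank_eq hfinrank
  let M : (Matrix ι ι K)ˣ := Matrix.GeneralLinearGroup.toLin.symm
    (LinearMap.GeneralLinearGroup.ofLinearEquiv (e.restrictScalars K))
  have hM : ∀ v : RepSpace ρ, (M : Matrix ι ι K) *ᵥ (v : ι → K) = (e v : ι → K) := by
    intro v
    show Matrix.mulVecLin _ v = _
    rw [← Matrix.GeneralLinearGroup.coe_toLin, MulEquiv.apply_symm_apply]
    rfl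
  refine ⟨M, fun a => (Units.mul_inv_eq_iff_eq_mul M).2 (Matrix.ext_iff_mulVec.2 fun v => ?_)⟩
  rw [← Matrix.mulVec_mulVec, ← Matrix.mulVec_mulVec]
  exact (hM _).trans <|
    (e.map_smul a (show RepSpace ρ from v)).trans (congrArg (σ a *ᵥ ·) (hM v).symm)

theorem dApprox_of_finiteDimensional_conjugate_general
    {K : Type*} [Field K] {A : Type*} [Ring A] [Algebra K A] [FiniteDimensional K A]
    (S : Finset A)
    (hgen : Algebra.adjoin K (S : Set A) = ⊤)
    (hnzd : ∀ a b : A, a * b = 0 → a = 0 ∨ b = 0)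
    (n d : ℕ) (hdn : n < d) (hdA : Module.finrank K A ≤ d)
    (φ ψ : A →ₗ[K] Matrix (Fin n) (Fin n) K)
    (hφ : IsDApprox K (S : Set A) d n φ)
    (hψ : IsDApprox K (S : Set A) d n ψ) :
    (∀ a b : A, φ (a * b) = φ a * φ b) ∧
    (∀ a b : A, ψ (a * b) = ψ a * ψ b) ∧
    ∃ M : (Matrix (Fin n) (Fin n) K)ˣ,
      ∀ a : A,
        (M : Matrix (Fin n) (Fin n) K) * φ a
            * ((M⁻¹ : (Matrix (Fin n) (Fin n) K)ˣ) : Matrix (Fin n) (Fin n) K)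
          = ψ a := by
  have hball := ballSpan_eq_top_of_finrank_le hgen hdA
  refine ⟨hφ.map_mul hdn hball, hψ.map_mul hdn hball, ?_⟩
  rcases subsingleton_or_nontrivial A with _ | _
  · exact ⟨1, fun a => by simp [Subsingleton.elim a 0]⟩
  have : NoZeroDivisors A := ⟨fun h => hnzd _ _ h⟩
  have : IsDomain A := NoZeroDivisors.to_isDomain A
  let _ : DivisionRing A := divisionRingOfFiniteDimensional K A
  exact AlgHom.exists_units_conj_of_divisionRing (hφ.toAlgHom hdn hball) (hψ.toAlgHom hdn hball)

/-- For a finite-dimensional algebra with no zero divisors, two `d`-approximations in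
`M_n(K)` with `d > n` and `d ≥ dim_K A` are genuine representations and are truly conjugate. -/
theorem dApprox_of_finiteDimensional_conjugate
    {K : Type*} [Field K] {A : Type*} [Ring A] [Algebra K A] [FiniteDimensional K A]
    (S : Finset A) (h1 : (1 : A) ∈ S)
    (hgen : Algebra.adjoin K (S : Set A) = ⊤)
    (hnzd : ∀ a b : A, a * b = 0 → a = 0 ∨ b = 0)
    (n d : ℕ) (hdn : n < d) (hdA : Module.finrank K A ≤ d)
    (φ ψ : A →ₗ[K] Matrix (Fin n) (Fin n) K)
    (hφ : IsDApprox K (S : Set A) d n φ)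
    (hψ : IsDApprox K (S : Set A) d n ψ) :
    (∀ a b : A, φ (a * b) = φ a * φ b) ∧
    (∀ a b : A, ψ (a * b) = ψ a * ψ b) ∧
    ∃ M : (Matrix (Fin n) (Fin n) K)ˣ,
      ∀ a : A,
        (M : Matrix (Fin n) (Fin n) K) * φ a
            * ((M⁻¹ : (Matrix (Fin n) (Fin n) K)ˣ) : Matrix (Fin n) (Fin n) K)
          = ψ a :=
  dApprox_of_finiteDimensional_conjugate_general S hgen hnzd n d hdn hdA φ ψ hφ hψ
end
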